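/- Weak duality for the constrained retrieval problem: for any feasible 0-1 assignment x (with Σ_i x_{t,i} = K for each t, group exposures e_g = Σ_t Σ_{i∈I_g} x_{t,i} satisfying e_g ≥ m_g, and Σ_g e_g = TK) and any dual vector μ ∈ R^{|G|}, the primal objective Σ_t Σ_i x_{t,i} r_{t,i} is at most Σ_t Σ_{k=1}^K (r_t − Aμ)_[k] + Σ_g m_g μ_g + (max_g μ_g)(TK − Σ_g m_g). -/

import Mathlib

open Finset

/-- `topK K hK x` is the sum of the `K` largest entries of `x : ℝ^N`,
characterized as the maximum of `∑ i ∈ S, x i` over `K`-element subsets `S`. -/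
noncomputable def topK {N : ℕ} (K : ℕ) (hK : K ≤ N) (x : Fin N → ℝ) : ℝ :=
  ((univ : Finset (Fin N)).powersetCard K).sup'
    (by rw [Finset.powersetCard_nonempty]; simpa using hK)
    (fun S => ∑ i ∈ S, x i)

/-! Split `r = (r - Aμ) + Aμ`. The first part of the objective is, user by user, a sum
over a `K`-element set and hence at most the top-`K` sum; the second part equals `∑ e_g μ_g`, and
`e_g = m_g + (e_g - m_g)` with `e_g - m_g ≥ 0` bounds it by `∑ m_g μ_g + max μ · (TK - ∑ m_g)`. -/

lemma sum_le_topK {N K : ℕ} (hK : K ≤ N) (y : Fin N → ℝ) {S : Finset (Fin N)} (hS : #S = K) :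
    ∑ i ∈ S, y i ≤ topK K hK y :=
  le_sup' (fun S => ∑ i ∈ S, y i) (mem_powersetCard.2 ⟨subset_univ S, hS⟩)

lemma sum_mul_eq_sum_filter_eq_one {ι : Type*} [Fintype ι] {x : ι → ℝ}
    (hx : ∀ i, x i = 0 ∨ x i = 1) (y : ι → ℝ) :
    ∑ i, x i * y i = ∑ i with x i = 1, y i := by
  rw [sum_filter]
  refine sum_congr rfl fun i _ => ?_
  rcases hx i with h | h <;> simp [h]

lemma sum_mul_le_topK {N K : ℕ} (hK : K ≤ N) {x : Fin N → ℝ} (hx : ∀ i, x i = 0 ∨ x i = 1)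
    (hxK : ∑ i, x i = K) (y : Fin N → ℝ) :
    ∑ i, x i * y i ≤ topK K hK y := by
  have hcard : #{i | x i = 1} = K := by
    have h := sum_mul_eq_sum_filter_eq_one hx 1
    simp only [Pi.one_apply, mul_one, sum_const, nsmul_eq_mul, hxK] at h
    exact_mod_cast h.symm
  rw [sum_mul_eq_sum_filter_eq_one hx]
  exact sum_le_topK hK y hcard

lemma sum_mul_comp_eq_sum_fiberwise {ι G : Type*} [Fintype G] [DecidableEq G] (s : Finset ι)
    (f : ι → G) (w : ι → ℝ) (μ : G → ℝ) :
    ∑ i ∈ s, w i * μ (f i) = ∑ a, (∑ i ∈ s with f i = a, w i) * μ a := by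
  rw [← sum_fiberwise s f]
  refine sum_congr rfl fun a _ => ?_
  rw [sum_mul]
  exact sum_congr rfl fun i hi => by rw [(mem_filter.1 hi).2]

lemma sum_mul_le_sum_mul_add_sup'_mul {G : Type*} {s : Finset G} (hs : s.Nonempty)
    {m e : G → ℝ} (hme : ∀ a ∈ s, m a ≤ e a) (μ : G → ℝ) :
    ∑ a ∈ s, e a * μ a ≤ ∑ a ∈ s, m a * μ a + s.sup' hs μ * (∑ a ∈ s, e a - ∑ a ∈ s, m a) := by
  have hterm : ∀ a ∈ s, e a * μ a ≤ m a * μ a + (e a - m a) * s.sup' hs μ := fun a ha => by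
    nlinarith [mul_le_mul_of_nonneg_left (le_sup' μ ha) (sub_nonneg.2 (hme a ha))]
  calc ∑ a ∈ s, e a * μ a ≤ ∑ a ∈ s, (m a * μ a + (e a - m a) * s.sup' hs μ) := sum_le_sum hterm
    _ = _ := by rw [sum_add_distrib, ← sum_mul, sum_sub_distrib, mul_comm]

theorem weak_duality_general {N K T : ℕ} (hK : K ≤ N)
    {G : Type*} [Fintype G] [Nonempty G] [DecidableEq G]
    (r : Fin T → Fin N → ℝ) (g : Fin N → G) (m : G → ℝ)
    (x : Fin T → Fin N → ℝ)
    (hx01 : ∀ t i, x t i = 0 ∨ x t i = 1)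
    (hxK : ∀ t, (∑ i, x t i) = (K : ℝ))
    (e : G → ℝ)
    (he : ∀ a, e a = ∑ t, ∑ i ∈ Finset.univ.filter (fun i => g i = a), x t i)
    (hem : ∀ a, m a ≤ e a)
    (heTK : (∑ a, e a) = (T : ℝ) * K)
    (μ : G → ℝ) :
    ∑ t, ∑ i, x t i * r t i ≤
      (∑ t, topK K hK (fun i => r t i - μ (g i))) + ∑ a, m a * μ a +
        (Finset.univ.sup' Finset.univ_nonempty μ) * ((T : ℝ) * K - ∑ a, m a) := by
  have hexposure : ∑ t, ∑ i, x t i * μ (g i) = ∑ a, e a * μ a := by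
    simp_rw [sum_mul_comp_eq_sum_fiberwise univ g, he, sum_mul]
    exact sum_comm
  calc ∑ t, ∑ i, x t i * r t i
      = ∑ t, ∑ i, x t i * (r t i - μ (g i)) + ∑ t, ∑ i, x t i * μ (g i) := by
        simp only [← sum_add_distrib, ← mul_add, sub_add_cancel]
    _ ≤ ∑ t, topK K hK (fun i => r t i - μ (g i)) +
          (∑ a, m a * μ a + univ.sup' univ_nonempty μ * (∑ a, e a - ∑ a, m a)) := by
        rw [hexposure]
        gcongr with t
        · exact sum_mul_le_topK hK (hx01 t) (hxK t) _
        · exact sum_mul_le_sum_mul_add_sup'_mul univ_nonempty (fun a _ => hem a) μ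
    _ = _ := by rw [heTK, add_assoc]

theorem weak_duality {N K T : ℕ} (hK : K ≤ N)
    {G : Type*} [Fintype G] [Nonempty G] [DecidableEq G]
    (r : Fin T → Fin N → ℝ) (g : Fin N → G) (m : G → ℝ) (hm : ∀ a, 0 < m a)
    (hmTK : ∑ a, m a ≤ (T : ℝ) * K)
    (x : Fin T → Fin N → ℝ)
    (hx01 : ∀ t i, x t i = 0 ∨ x t i = 1)
    (hxK : ∀ t, (∑ i, x t i) = (K : ℝ))
    (e : G → ℝ)
    (he : ∀ a, e a = ∑ t, ∑ i ∈ Finset.univ.filter (fun i => g i = a), x t i)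
    (hem : ∀ a, m a ≤ e a)
    (heTK : (∑ a, e a) = (T : ℝ) * K)
    (μ : G → ℝ) :
    ∑ t, ∑ i, x t i * r t i ≤
      (∑ t, topK K hK (fun i => r t i - μ (g i))) + ∑ a, m a * μ a +
        (Finset.univ.sup' Finset.univ_nonempty μ) * ((T : ℝ) * K - ∑ a, m a) :=
  weak_duality_general hK r g m x hx01 hxK e he hem heTK μ
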